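/- arXiv:0806.0434 — 4 statements merged into one kernel-verified Lean document; each statement's English description precedes it below -/
import Mathlib

section
/- Let n ≥ 3 and let S = {i_1, i_2, ..., i_k} ⊆ [n] with i_1 < i_2 < ... < i_k. Then there exists a permutation σ of [n] with circular peak set CP(σ) = S if and only if i_j ≥ 2j + 1 for every j ∈ {1, ..., k}. -/
open Finset Polynomial

/-- `σ` is a permutation of `[n] = {1, …, n}` (viewed as a function `ℕ → ℕ`
restricted to a bijection of `{1, …, n}` onto itself). -/
def IsPermOn (n : ℕ) (σ : ℕ → ℕ) : Prop :=
  Set.BijOn σ (Set.Icc 1 n) (Set.Icc 1 n)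

/-- The circular peak set of `σ` (as a permutation of `[n]`):
`CP(σ) = {σ(i) : 2 ≤ i ≤ n−1, σ(i−1) < σ(i) > σ(i+1)}`. -/
def CP (n : ℕ) (σ : ℕ → ℕ) : Finset ℕ :=
  ((Finset.Icc 2 (n - 1)).filter (fun i => σ (i - 1) < σ i ∧ σ (i + 1) < σ i)).image σ

open scoped Classical in
/-- `Pn n` is the collection of all subsets `S ⊆ [n]` arising as the circular peak
set of some permutation of `[n]`. -/
noncomputable def Pn (n : ℕ) : Finset (Finset ℕ) :=
  (Finset.Icc 1 n).powerset.filter (fun S => ∃ σ : ℕ → ℕ, IsPermOn n σ ∧ CP n σ = S)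

/-- `pcount n k` is the number of members of `Pn n` of cardinality `k`;
in the paper's notation, `p_{n,i} = pcount n (i+1)`. -/
noncomputable def pcount (n k : ℕ) : ℕ :=
  ((Pn n).filter (fun S => S.card = k)).card

/-- The f-polynomial `P_n(x) = Σ_{i=0}^{⌊(n−1)/2⌋} p_{n,i−1} x^{⌊(n−1)/2⌋−i}`. -/
noncomputable def fpoly (n : ℕ) : Polynomial ℚ :=
  ∑ i ∈ Finset.range ((n - 1) / 2 + 1),
    Polynomial.C (pcount n i : ℚ) * Polynomial.X ^ ((n - 1) / 2 - i)

/-!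
Necessity: let `x` be the `j`-th smallest element of `CP(σ)` and `P` the set of peak positions
with values at most `x`, so `|P| ≥ j`. Two peaks are never adjacent, so `P`, the right neighbours
of `P` and the left neighbour of the leftmost position of `P` are `2|P| + 1` distinct positions,
all carrying values in `[1, x]`.

Sufficiency: write `l₁ < ⋯ < l_k` for the elements of `S` and `b₁ < b₂ < ⋯` for the remaining
elements of `[n]`. Exactly `lⱼ - j ≥ j + 1` of the `b`'s lie below `lⱼ`, so `b_{j+1} < lⱼ`, and
the word `b₁ l₁ b₂ l₂ ⋯ b_k l_k b_{k+1} b_{k+2} ⋯` has its peaks exactly at the `lⱼ`.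
-/

lemma Nat.count_not (p : ℕ → Prop) [DecidablePred p] (m : ℕ) :
    Nat.count (fun x => ¬p x) m = m - Nat.count p m := by
  have : Nat.count p m + Nat.count (fun x => ¬p x) m = m := by
    simp only [Nat.count_eq_card_filter_range]
    rw [card_filter_add_card_filter_not, card_range]
  omega

namespace Finset

lemma finite_ofPred_mem (S : Finset ℕ) : (Set.ofPred (· ∈ S)).Finite :=
  S.finite_toSet

@[simp]
lemma toFinset_finite_ofPred_mem (S : Finset ℕ) : (finite_ofPred_mem S).toFinset = S := by
  ext
  simp

lemma image_nth_mem_Iio_card (S : Finset ℕ) : Nat.nth (· ∈ S) '' Set.Iio #S = S := by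
  simpa using Nat.image_nth_Iio_card (finite_ofPred_mem S)

lemma count_mem_eq_card {S : Finset ℕ} {m : ℕ} (hS : ∀ x ∈ S, x < m) :
    Nat.count (· ∈ S) m = #S := by
  rw [Nat.count_eq_card_filter_range]
  congr 1
  ext x
  simpa using hS x

lemma forall_le_sort_get_iff (S : Finset ℕ) (f : ℕ → ℕ) :
    (∀ (j : ℕ) (hj : j < (S.sort (· ≤ ·)).length),
        f j ≤ (S.sort (· ≤ ·)).get ⟨j, hj⟩) ↔
      ∀ j < #S, f j ≤ Nat.nth (· ∈ S) j := by
  have hnth (j : ℕ) : Nat.nth (· ∈ S) j = (S.sort (· ≤ ·)).getD j 0 := by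
    rw [Nat.nth_eq_getD_sort (finite_ofPred_mem S), toFinset_finite_ofPred_mem]
  simp only [List.get_eq_getElem, length_sort, hnth]
  refine forall_congr' fun j => forall_congr' fun hj => ?_
  rw [List.getD_eq_getElem _ _ (by simpa using hj)]

lemma infinite_ofPred_not_mem (S : Finset ℕ) : (Set.ofPred (· ∉ S)).Infinite :=
  S.finite_toSet.infinite_compl

lemma nth_not_mem_lt_nth_mem_iff {S : Finset ℕ} {i j : ℕ} (hj : j < #S) :
    Nat.nth (· ∉ S) i < Nat.nth (· ∈ S) j ↔ i + j < Nat.nth (· ∈ S) j := by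
  rw [← Nat.lt_nth_iff_count_lt S.infinite_ofPred_not_mem, Nat.count_not,
    Nat.count_nth_of_lt_card_finite (finite_ofPred_mem S) (by simpa using hj)]
  omega

section

variable {S : Finset ℕ} {n : ℕ}

lemma count_not_mem_succ_eq (hS : S ⊆ Icc 1 n) :
    Nat.count (· ∉ S) (n + 1) = n + 1 - #S := by
  rw [Nat.count_not, count_mem_eq_card fun x hx => by have := mem_Icc.1 (hS hx); omega]

lemma mapsTo_nth_not_mem_succ (hS : S ⊆ Icc 1 n) :
    Set.MapsTo (fun t => Nat.nth (· ∉ S) (t + 1)) (Set.Iio (n - #S)) (Set.Icc 1 n) := by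
  intro t (ht : t < n - #S)
  have hlt : Nat.nth (· ∉ S) (t + 1) < n + 1 :=
    Nat.nth_lt_of_lt_count (by rw [count_not_mem_succ_eq hS]; omega)
  have hpos : Nat.nth (· ∉ S) 0 < Nat.nth (· ∉ S) (t + 1) :=
    Nat.nth_strictMono S.infinite_ofPred_not_mem t.succ_pos
  simp only [Set.mem_Icc]
  omega

lemma surjOn_nth_not_mem_succ (hS : S ⊆ Icc 1 n) :
    Set.SurjOn (fun t => Nat.nth (· ∉ S) (t + 1)) (Set.Iio (n - #S)) (Set.Icc 1 n \ S) := by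
  rintro v ⟨⟨hv1, hvn⟩, hvS : v ∉ S⟩
  have hpos : 0 < Nat.count (· ∉ S) v :=
    (Nat.zero_le _).trans_lt
      (Nat.count_strict_mono (p := (· ∉ S)) (m := 0) (fun h0 => by simpa using hS h0) hv1)
  have hlt : Nat.count (· ∉ S) v < n + 1 - #S :=
    count_not_mem_succ_eq hS ▸ Nat.count_strict_mono (p := (· ∉ S)) hvS (by omega)
  refine ⟨Nat.count (· ∉ S) v - 1, show _ < n - #S by omega, ?_⟩
  simp only [Nat.sub_add_cancel hpos]
  exact Nat.nth_count hvS

end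

end Finset

def IsPeakAt (σ : ℕ → ℕ) (i : ℕ) : Prop :=
  σ (i - 1) < σ i ∧ σ (i + 1) < σ i

instance (σ : ℕ → ℕ) : DecidablePred (IsPeakAt σ) :=
  fun _ => inferInstanceAs (Decidable (_ ∧ _))

lemma mem_CP {n : ℕ} {σ : ℕ → ℕ} {y : ℕ} :
    y ∈ CP n σ ↔ ∃ i ∈ Icc 2 (n - 1), IsPeakAt σ i ∧ σ i = y := by
  simp [CP, IsPeakAt, and_assoc]

lemma IsPeakAt.not_succ {σ : ℕ → ℕ} {i : ℕ} (h : IsPeakAt σ i) : ¬IsPeakAt σ (i + 1) :=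
  fun h' => lt_asymm h.2 (by simpa using h'.1)

lemma card_insert_pred_min'_union_image_succ {P : Finset ℕ} (hP : P.Nonempty) (h0 : 0 ∉ P)
    (hsep : ∀ p ∈ P, p + 1 ∉ P) :
    #(insert (P.min' hP - 1) (P ∪ P.image (· + 1))) = 2 * #P + 1 := by
  have hdisj : Disjoint P (P.image (· + 1)) := by
    simp only [disjoint_left, mem_image]
    rintro _ ha ⟨b, hb, rfl⟩
    exact hsep b hb ha
  have hnew : P.min' hP - 1 ∉ P ∪ P.image (· + 1) := by
    have hpos : P.min' hP ≠ 0 := fun h => h0 (h ▸ P.min'_mem hP)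
    simp only [mem_union, mem_image, not_or, not_exists, not_and]
    refine ⟨fun h => ?_, fun p hp _ => ?_⟩
    · have := P.min'_le _ h
      omega
    · have := P.min'_le _ hp
      omega
  rw [card_insert_of_notMem hnew, card_union_of_disjoint hdisj,
    card_image_of_injective _ (add_left_injective 1)]
  ring

lemma two_mul_card_add_one_le_of_isPeakAt {n x : ℕ} {σ : ℕ → ℕ} (hσ : IsPermOn n σ)
    {P : Finset ℕ} (hP : P.Nonempty) (hPn : P ⊆ Icc 2 (n - 1))
    (hpeak : ∀ p ∈ P, IsPeakAt σ p) (hx : ∀ p ∈ P, σ p ≤ x) :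
    2 * #P + 1 ≤ x := by
  have hbounds (p : ℕ) (hp : p ∈ P) : 2 ≤ p ∧ p ≤ n - 1 := mem_Icc.1 (hPn hp)
  set U := insert (P.min' hP - 1) (P ∪ P.image (· + 1))
  have hU : ∀ u ∈ U, u ∈ Set.Icc 1 n ∧ σ u ≤ x := by
    simp only [U, mem_insert, mem_union, mem_image]
    rintro u (rfl | hu | ⟨p, hp, rfl⟩)
    · have hmin := P.min'_mem hP
      have := hbounds _ hmin
      exact ⟨⟨by omega, by omega⟩, ((hpeak _ hmin).1.trans_le (hx _ hmin)).le⟩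
    · have := hbounds u hu
      exact ⟨⟨by omega, by omega⟩, hx u hu⟩
    · have := hbounds p hp
      exact ⟨⟨by omega, by omega⟩, ((hpeak p hp).2.trans_le (hx p hp)).le⟩
  have hsep (p : ℕ) (hp : p ∈ P) : p + 1 ∉ P := fun hp' => (hpeak p hp).not_succ (hpeak _ hp')
  have h0 : 0 ∉ P := fun h => by simpa using hbounds 0 h
  calc 2 * #P + 1 = #U := (card_insert_pred_min'_union_image_succ hP h0 hsep).symm
    _ = #(U.image σ) := (card_image_of_injOn (hσ.injOn.mono fun u hu => (hU u hu).1)).symm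
    _ ≤ #(Icc 1 x) := card_le_card fun v hv => by
      obtain ⟨u, hu, rfl⟩ := mem_image.1 hv
      exact mem_Icc.2 ⟨(hσ.mapsTo (hU u hu).1).1, (hU u hu).2⟩
    _ = x := by simp

lemma le_nth_of_CP_eq {n : ℕ} {σ : ℕ → ℕ} (hσ : IsPermOn n σ) {S : Finset ℕ}
    (hCP : CP n σ = S) {j : ℕ} (hj : j < #S) :
    2 * (j + 1) + 1 ≤ Nat.nth (· ∈ S) j := by
  set x := Nat.nth (· ∈ S) j
  set P := {i ∈ Icc 2 (n - 1) | IsPeakAt σ i ∧ σ i ≤ x}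
  have hcount : #{y ∈ range (x + 1) | y ∈ S} = j + 1 := by
    rw [← Nat.count_eq_card_filter_range]
    exact Nat.count_nth_succ fun hf => by simpa using hj
  have hsub : {y ∈ range (x + 1) | y ∈ S} ⊆ P.image σ := by
    intro y hy
    simp only [mem_filter, mem_range, ← hCP, mem_CP] at hy
    obtain ⟨hyx, i, hi, hpeak, rfl⟩ := hy
    exact mem_image_of_mem σ (mem_filter.2 ⟨hi, hpeak, by omega⟩)
  have hP : j + 1 ≤ #P := hcount ▸ (card_le_card hsub).trans card_image_le
  have := two_mul_card_add_one_le_of_isPeakAt hσ (P := P) (card_pos.1 (by omega))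
    (filter_subset _ _) (fun p hp => (mem_filter.1 hp).2.1) (fun p hp => (mem_filter.1 hp).2.2)
  omega

section Interleave

variable {k : ℕ} {l b : ℕ → ℕ}

/-- The word `b 0, l 0, b 1, l 1, …, b (k-1), l (k-1), b k, b (k+1), …`, indexed from `1`. -/
def interleave (k : ℕ) (l b : ℕ → ℕ) (p : ℕ) : ℕ :=
  if p ≤ 2 * k then if Even p then l (p / 2 - 1) else b (p / 2) else b (p - k - 1)

lemma interleave_two_mul_add_two {j : ℕ} (hj : j < k) :
    interleave k l b (2 * j + 2) = l j := by
  rw [interleave, if_pos (by omega), if_pos (by simp [parity_simps])]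
  congr 1
  omega

lemma interleave_two_mul_add_one {t : ℕ} (ht : t ≤ k) :
    interleave k l b (2 * t + 1) = b t := by
  by_cases h : 2 * t + 1 ≤ 2 * k
  · rw [interleave, if_pos h, if_neg (by simp [parity_simps])]
    congr 1
    omega
  · rw [interleave, if_neg h]
    congr 1
    omega

lemma interleave_of_two_mul_lt {p : ℕ} (hp : 2 * k < p) :
    interleave k l b p = b (p - k - 1) := by
  rw [interleave, if_neg (by omega)]

lemma interleave_lt_interleave_succ (hb : StrictMono b) (hbl : ∀ j < k, b (j + 1) < l j)
    {p : ℕ} (hp : ¬(Even p ∧ p ≤ 2 * k)) :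
    interleave k l b p < interleave k l b (p + 1) := by
  by_cases hpk : p ≤ 2 * k
  · obtain ⟨t, rfl⟩ : Odd p := Nat.not_even_iff_odd.1 fun h => hp ⟨h, hpk⟩
    rw [interleave_two_mul_add_one (by omega), interleave_two_mul_add_two (by omega)]
    exact (hb t.lt_succ_self).trans (hbl t (by omega))
  · rw [interleave_of_two_mul_lt (by omega), interleave_of_two_mul_lt (by omega)]
    exact hb (by omega)

lemma isPeakAt_interleave_iff (hb : StrictMono b) (hbl : ∀ j < k, b (j + 1) < l j)
    {p : ℕ} (hp : 2 ≤ p) :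
    IsPeakAt (interleave k l b) p ↔ Even p ∧ p ≤ 2 * k := by
  refine ⟨fun h => by_contra fun hne => lt_asymm h.2 (interleave_lt_interleave_succ hb hbl hne),
    ?_⟩
  rintro ⟨⟨m, rfl⟩, hm⟩
  obtain ⟨j, rfl⟩ : ∃ j, m = j + 1 := ⟨m - 1, by omega⟩
  have hj : j < k := by omega
  rw [IsPeakAt, show j + 1 + (j + 1) = 2 * j + 2 by ring, interleave_two_mul_add_two hj,
    show 2 * j + 2 - 1 = 2 * j + 1 by rfl, interleave_two_mul_add_one hj.le,
    show 2 * j + 2 + 1 = 2 * (j + 1) + 1 by ring, interleave_two_mul_add_one hj]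
  exact ⟨(hb j.lt_succ_self).trans (hbl j hj), hbl j hj⟩

lemma CP_interleave {n : ℕ} (hb : StrictMono b) (hbl : ∀ j < k, b (j + 1) < l j)
    (hk : 2 * k ≤ n - 1) :
    CP n (interleave k l b) = (range k).image l := by
  ext y
  simp only [mem_CP, mem_image, mem_range, mem_Icc]
  constructor
  · rintro ⟨i, hi, hpeak, rfl⟩
    obtain ⟨⟨m, rfl⟩, hm⟩ := (isPeakAt_interleave_iff hb hbl hi.1).1 hpeak
    refine ⟨m - 1, by omega, ?_⟩
    rw [show m + m = 2 * (m - 1) + 2 by omega, interleave_two_mul_add_two (by omega)]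
  · rintro ⟨j, hj, rfl⟩
    refine ⟨2 * j + 2, ⟨by omega, by omega⟩, ?_, interleave_two_mul_add_two hj⟩
    exact (isPeakAt_interleave_iff hb hbl (by omega)).2 ⟨⟨j + 1, by ring⟩, by omega⟩

lemma bijOn_interleave {n : ℕ} {S : Set ℕ} (hk : 2 * k ≤ n)
    (hl : Set.MapsTo l (Set.Iio k) (Set.Icc 1 n))
    (hb : Set.MapsTo b (Set.Iio (n - k)) (Set.Icc 1 n))
    (hlS : Set.SurjOn l (Set.Iio k) S) (hbS : Set.SurjOn b (Set.Iio (n - k)) (Set.Icc 1 n \ S)) :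
    Set.BijOn (interleave k l b) (Set.Icc 1 n) (Set.Icc 1 n) := by
  have hmaps : Set.MapsTo (interleave k l b) (Set.Icc 1 n) (Set.Icc 1 n) := by
    rintro p ⟨hp1, hpn⟩
    unfold interleave
    split_ifs with hpk hev
    · rw [Nat.even_iff] at hev
      exact hl (show p / 2 - 1 < k by omega)
    · rw [Nat.not_even_iff] at hev
      exact hb (show p / 2 < n - k by omega)
    · exact hb (show p - k - 1 < n - k by omega)
  refine (Set.finite_Icc 1 n).surjOn_iff_bijOn_of_mapsTo hmaps |>.1 ?_
  rintro v ⟨hv1, hvn⟩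
  by_cases hvS : v ∈ S
  · obtain ⟨j, hj, rfl⟩ := hlS hvS
    exact ⟨2 * j + 2, ⟨by omega, by simp at hj; omega⟩, interleave_two_mul_add_two hj⟩
  · obtain ⟨t, ht, rfl⟩ := hbS ⟨⟨hv1, hvn⟩, hvS⟩
    simp only [Set.mem_Iio] at ht
    rcases le_or_gt t k with htk | htk
    · exact ⟨2 * t + 1, ⟨by omega, by omega⟩, interleave_two_mul_add_one htk⟩
    · refine ⟨t + k + 1, ⟨by omega, by omega⟩, ?_⟩
      rw [interleave_of_two_mul_lt (by omega)]
      congr 1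
      omega

end Interleave

lemma exists_CP_eq_of_le_nth {n : ℕ} {S : Finset ℕ} (hS : S ⊆ Icc 1 n)
    (h : ∀ j < #S, 2 * (j + 1) + 1 ≤ Nat.nth (· ∈ S) j) :
    ∃ σ : ℕ → ℕ, IsPermOn n σ ∧ CP n σ = S := by
  set l := Nat.nth (· ∈ S)
  -- `Nat.nth (· ∉ S) 0 = 0` lies outside `[n]`, hence the shift
  set b := fun t => Nat.nth (· ∉ S) (t + 1)
  have hl : l '' Set.Iio #S = S := S.image_nth_mem_Iio_card
  have hlS (j : ℕ) (hj : j < #S) : l j ∈ Icc 1 n := hS (hl.subset ⟨j, hj, rfl⟩)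
  have hb : StrictMono b :=
    (Nat.nth_strictMono S.infinite_ofPred_not_mem).comp (strictMono_id.add_const 1)
  have hbl : ∀ j < #S, b (j + 1) < l j := fun j hj =>
    (nth_not_mem_lt_nth_mem_iff hj).2 (show j + 1 + 1 + j < l j by have := h j hj; omega)
  have hk : 2 * #S ≤ n - 1 := by
    rcases Nat.eq_zero_or_pos #S with hk | hk
    · omega
    · have := h (#S - 1) (by omega)
      have := mem_Icc.1 (hlS (#S - 1) (by omega))
      omega
  refine ⟨interleave #S l b, bijOn_interleave (by omega) (fun j hj => by simpa using hlS j hj)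
    (mapsTo_nth_not_mem_succ hS) hl.symm.subset (surjOn_nth_not_mem_succ hS), ?_⟩
  rw [CP_interleave hb hbl hk]
  exact coe_injective (by simpa using hl)

theorem circular_peak_set_nonempty_iff_general (n : ℕ) (S : Finset ℕ)
    (hS : S ⊆ Finset.Icc 1 n) :
    (∃ σ : ℕ → ℕ, IsPermOn n σ ∧ CP n σ = S) ↔
      ∀ (j : ℕ) (hj : j < (S.sort (· ≤ ·)).length),
        2 * (j + 1) + 1 ≤ (S.sort (· ≤ ·)).get ⟨j, hj⟩ := by
  refine Iff.trans ?_ (S.forall_le_sort_get_iff _).symm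
  exact ⟨fun ⟨σ, hσ, hCP⟩ j hj => le_nth_of_CP_eq hσ hCP hj, exists_CP_eq_of_le_nth hS⟩

/-- Theorem 2.1: for `S = {i_1 < … < i_k} ⊆ [n]`, some permutation of `[n]` has
circular peak set `S` iff `i_j ≥ 2j+1` for all `j ∈ [k]`. -/
theorem circular_peak_set_nonempty_iff (n : ℕ) (hn : 3 ≤ n) (S : Finset ℕ)
    (hS : S ⊆ Finset.Icc 1 n) :
    (∃ σ : ℕ → ℕ, IsPermOn n σ ∧ CP n σ = S) ↔
      ∀ (j : ℕ) (hj : j < (S.sort (· ≤ ·)).length),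
        2 * (j + 1) + 1 ≤ (S.sort (· ≤ ·)).get ⟨j, hj⟩ :=
  circular_peak_set_nonempty_iff_general n S hS
end

section
/- Let n ≥ 3. The collection P_n is an abstract simplicial complex on the vertex set [3, n] = {3, 4, ..., n}: (1) the empty set belongs to P_n; (2) for every x with 3 ≤ x ≤ n, the singleton {x} belongs to P_n; (3) every element of P_n is a subset of {3, 4, ..., n}; and (4) if S ∈ P_n and T ⊆ S then T ∈ P_n. -/
open Finset Polynomial

/-!
A set `S` is the circular peak set of a permutation of `[n]` iff `S ⊆ [n]` and every `s ∈ S`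
satisfies `2 · #{t ∈ S | t < s} + 3 ≤ s`, a condition visibly inherited by subsets.

Necessity: the peaks with value `≤ s`, their left neighbours and the right neighbour of the last
of them are `2 · #{t ∈ S | t ≤ s} + 1` distinct positions (two peaks are never adjacent), carrying
distinct values in `[1, s]`. Sufficiency: with `S = {s₀ < s₁ < …}` and `[n] \ S = {a₀ < a₁ < …}`,
the condition gives `a_{t+1} < s_t`, so `a₀ s₀ a₁ s₁ … a_{k-1} s_{k-1} a_k a_{k+1} …` has peak
set exactly `S`.
-/

open Finset

namespace Nat

variable (F : Finset ℕ)

lemma nth_mem_of_lt_card_finset {t : ℕ} (ht : t < #F) : nth (· ∈ F) t ∈ F :=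
  nth_mem_of_lt_card (p := (· ∈ F)) F.finite_toSet (by simpa using ht)

lemma nth_lt_nth_of_lt_card_finset {s t : ℕ} (hst : s < t) (ht : t < #F) :
    nth (· ∈ F) s < nth (· ∈ F) t :=
  nth_lt_nth_of_lt_card (p := (· ∈ F)) F.finite_toSet hst (by simpa using ht)

lemma count_lt_card_finset {x : ℕ} (hx : x ∈ F) : count (· ∈ F) x < #F := by
  simpa using count_lt_card (p := (· ∈ F)) F.finite_toSet hx

lemma count_nth_of_lt_card_finset {t : ℕ} (ht : t < #F) : count (· ∈ F) (nth (· ∈ F) t) = t :=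
  count_nth_of_lt_card_finite (p := (· ∈ F)) F.finite_toSet (by simpa using ht)

lemma count_sdiff_add_count_Icc {n : ℕ} {S : Finset ℕ} (hS : S ⊆ Icc 1 n) {m : ℕ}
    (hm : m ≤ n + 1) : count (· ∈ Icc 1 n \ S) m + count (· ∈ S) m = m - 1 := by
  induction m with
  | zero => simp
  | succ m ih =>
    have := ih (by omega)
    rw [count_succ, count_succ]
    by_cases hmS : m ∈ S
    · have : 1 ≤ m := (mem_Icc.1 (hS hmS)).1
      rw [if_neg fun h => (mem_sdiff.1 h).2 hmS, if_pos hmS]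
      omega
    · by_cases hm0 : m = 0
      · subst hm0
        simp [hmS]
      · rw [if_pos (mem_sdiff.2 ⟨mem_Icc.2 ⟨by omega, by omega⟩, hmS⟩), if_neg hmS]
        omega

end Nat

def IsPeakAdmissible (S : Finset ℕ) : Prop :=
  ∀ s ∈ S, 2 * Nat.count (· ∈ S) s + 3 ≤ s

lemma isPeakAdmissible_empty : IsPeakAdmissible ∅ := by
  simp [IsPeakAdmissible]

lemma isPeakAdmissible_singleton {x : ℕ} (hx : 3 ≤ x) : IsPeakAdmissible {x} := by
  simpa [IsPeakAdmissible, Nat.count_eq_card_filter_range]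

namespace IsPeakAdmissible

variable {n : ℕ} {S : Finset ℕ}

lemma mono {T : Finset ℕ} (hS : IsPeakAdmissible S) (hTS : T ⊆ S) : IsPeakAdmissible T := by
  intro t ht
  have hcount : Nat.count (· ∈ T) t ≤ Nat.count (· ∈ S) t :=
    Nat.count_mono_left fun _ _ hk => hTS hk
  have := hS t (hTS ht)
  omega

lemma subset_Icc_three (hS : IsPeakAdmissible S) (hSn : S ⊆ Icc 1 n) : S ⊆ Icc 3 n := by
  intro s hs
  have := hS s hs
  exact mem_Icc.2 ⟨by omega, (mem_Icc.1 (hSn hs)).2⟩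

lemma nth_compl_lt_nth (hS : IsPeakAdmissible S) (hSn : S ⊆ Icc 1 n) {t j : ℕ} (ht : t < #S)
    (hj : j ≤ t + 1) : Nat.nth (· ∈ Icc 1 n \ S) j < Nat.nth (· ∈ S) t := by
  set s := Nat.nth (· ∈ S) t
  have hsS : s ∈ S := Nat.nth_mem_of_lt_card_finset S ht
  have hs := hS s hsS
  have hsn := (mem_Icc.1 (hSn hsS)).2
  have hsplit := Nat.count_sdiff_add_count_Icc hSn (m := s) (by omega)
  rw [Nat.count_nth_of_lt_card_finset S ht] at hs hsplit
  exact Nat.nth_lt_of_lt_count (by omega)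

lemma two_mul_card_le (hS : IsPeakAdmissible S) (hSn : S ⊆ Icc 1 n) : 2 * #S ≤ n := by
  obtain hS0 | hSpos := Nat.eq_zero_or_pos #S
  · omega
  have hlast := Nat.nth_mem_of_lt_card_finset S (Nat.sub_one_lt_of_lt hSpos)
  have h := hS _ hlast
  rw [Nat.count_nth_of_lt_card_finset S (Nat.sub_one_lt_of_lt hSpos)] at h
  have := (mem_Icc.1 (hSn hlast)).2
  omega

end IsPeakAdmissible

lemma two_mul_card_add_one_le_card {F : Finset ℕ} (hF : F.Nonempty) (h0 : 0 ∉ F)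
    (hsep : ∀ i ∈ F, i + 1 ∉ F) :
    2 * #F + 1 ≤ #(F ∪ F.image (· - 1) ∪ {F.max' hF + 1}) := by
  have hpred : #(F.image (· - 1)) = #F := by
    refine card_image_of_injOn fun a ha b hb hab => ?_
    have : a ≠ 0 := fun h => h0 (h ▸ ha)
    have : b ≠ 0 := fun h => h0 (h ▸ hb)
    omega
  have hdisj : Disjoint F (F.image (· - 1)) := by
    refine disjoint_left.2 fun a ha ha' => ?_
    obtain ⟨b, hb, rfl⟩ := mem_image.1 ha'
    have : b ≠ 0 := fun h => h0 (h ▸ hb)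
    exact hsep _ ha (by rwa [Nat.sub_add_cancel (by omega)])
  have hmax : F.max' hF + 1 ∉ F ∪ F.image (· - 1) := by
    simp only [mem_union, mem_image, not_or, not_exists, not_and]
    refine ⟨hsep _ (F.max'_mem hF), fun b hb hb' => ?_⟩
    have := F.le_max' b hb
    omega
  rw [card_union_of_disjoint (disjoint_singleton_right.2 hmax), card_union_of_disjoint hdisj,
    hpred, card_singleton]
  omega

section peaks

variable {n : ℕ} {σ : ℕ → ℕ}

lemma two_mul_card_add_one_le_of_peaks_le (hσ : IsPermOn n σ) {G : Finset ℕ}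
    (hG : G.Nonempty) (hpeak : ∀ i ∈ G, i ∈ Icc 2 (n - 1) ∧ σ (i - 1) < σ i ∧ σ (i + 1) < σ i)
    {s : ℕ} (hs : ∀ i ∈ G, σ i ≤ s) : 2 * #G + 1 ≤ s := by
  set H := G ∪ G.image (· - 1) ∪ {G.max' hG + 1}
  have hmax := hpeak _ (G.max'_mem hG)
  have hHn : ∀ j ∈ H, j ∈ Set.Icc 1 n := by
    simp only [H, mem_union, mem_image, mem_singleton, Set.mem_Icc]
    rintro j ((hj | ⟨i, hi, rfl⟩) | rfl)
    · have := mem_Icc.1 (hpeak j hj).1; omega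
    · have := mem_Icc.1 (hpeak i hi).1; omega
    · have := mem_Icc.1 hmax.1; omega
  have hHs : ∀ j ∈ H, σ j ∈ Icc 1 s := by
    intro j hj
    refine mem_Icc.2 ⟨(hσ.mapsTo (hHn j hj)).1, ?_⟩
    simp only [H, mem_union, mem_image, mem_singleton] at hj
    rcases hj with (hj | ⟨i, hi, rfl⟩) | rfl
    · exact hs j hj
    · exact ((hpeak i hi).2.1.trans_le (hs i hi)).le
    · exact (hmax.2.2.trans_le (hs _ (G.max'_mem hG))).le
  have h0 : 0 ∉ G := fun h => by have := mem_Icc.1 (hpeak 0 h).1; omega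
  have hsep : ∀ i ∈ G, i + 1 ∉ G := fun i hi hi' => by
    have h1 := (hpeak (i + 1) hi').2.1
    rw [Nat.add_sub_cancel] at h1
    exact (hpeak i hi).2.2.not_gt h1
  calc 2 * #G + 1 ≤ #H := two_mul_card_add_one_le_card hG h0 hsep
    _ ≤ #(Icc 1 s) := card_le_card_of_injOn σ hHs (hσ.injOn.mono fun j hj => hHn j hj)
    _ = s := by simp

lemma isPeakAdmissible_CP (hσ : IsPermOn n σ) : IsPeakAdmissible (CP n σ) := by
  intro s hs
  set G := {i ∈ Icc 2 (n - 1) | σ (i - 1) < σ i ∧ σ (i + 1) < σ i ∧ σ i ≤ s}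
  have hGCP : G.image σ = {x ∈ Finset.range (s + 1) | x ∈ CP n σ} := by
    ext x
    simp only [G, mem_image, mem_filter, mem_range]
    simp only [CP, mem_image, mem_filter]
    constructor
    · rintro ⟨i, ⟨hi, h1, h2, h3⟩, rfl⟩
      exact ⟨by omega, i, ⟨hi, h1, h2⟩, rfl⟩
    · rintro ⟨hx, i, ⟨hi, h1, h2⟩, rfl⟩
      exact ⟨i, ⟨hi, h1, h2, by omega⟩, rfl⟩
  have hcard : #G = Nat.count (· ∈ CP n σ) s + 1 := by
    rw [← Nat.count_succ_eq_succ_count_iff.2 hs, Nat.count_eq_card_filter_range, ← hGCP,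
      card_image_of_injOn (hσ.injOn.mono fun i hi => ?_)]
    have := mem_Icc.1 (mem_filter.1 (mem_coe.1 hi)).1
    exact Set.mem_Icc.2 ⟨by omega, by omega⟩
  have hG : G.Nonempty := by
    rw [← image_nonempty (f := σ), hGCP]
    exact ⟨s, mem_filter.2 ⟨mem_range.2 (lt_add_one s), hs⟩⟩
  have := two_mul_card_add_one_le_of_peaks_le hσ hG
    (fun i hi => by simp only [G, mem_filter] at hi; exact ⟨hi.1, hi.2.1, hi.2.2.1⟩)
    (fun i hi => (mem_filter.1 hi).2.2.2)
  omega

end peaks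

/-- The word `a₀ s₀ a₁ s₁ … a_{k-1} s_{k-1} a_k a_{k+1} …`, with `s` and `a` listing `S` and
`[1, n] \ S` increasingly: position `2t + 2` carries `s_t`, and any other position `i` carries
`a_j` for `j = i - 1 - min k (i / 2)`, the number of earlier positions not carrying an `s`. -/
noncomputable def peakPerm (n : ℕ) (S : Finset ℕ) (i : ℕ) : ℕ :=
  if Even i ∧ i ≤ 2 * #S then Nat.nth (· ∈ S) (i / 2 - 1)
  else Nat.nth (· ∈ Icc 1 n \ S) (i - 1 - min (#S) (i / 2))

section peakPerm

variable {n : ℕ} {S : Finset ℕ}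

lemma peakPerm_two_mul_add_two {t : ℕ} (ht : t < #S) :
    peakPerm n S (2 * t + 2) = Nat.nth (· ∈ S) t := by
  rw [peakPerm, if_pos ⟨⟨t + 1, by omega⟩, by omega⟩]
  congr 1
  omega

lemma peakPerm_add_min (j : ℕ) :
    peakPerm n S (j + min j #S + 1) = Nat.nth (· ∈ Icc 1 n \ S) j := by
  rw [peakPerm, if_neg]
  · congr 1
    omega
  · rintro ⟨he, hle⟩
    rw [Nat.even_iff] at he
    omega

lemma eq_two_mul_add_two_or_eq_add_min (k : ℕ) {i : ℕ} (hi : 1 ≤ i) :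
    (∃ t < k, i = 2 * t + 2) ∨ ∃ j, i = j + min j k + 1 := by
  by_cases h : Even i ∧ i ≤ 2 * k
  · rw [Nat.even_iff] at h
    exact Or.inl ⟨i / 2 - 1, by omega, by omega⟩
  · rw [Nat.even_iff] at h
    exact Or.inr ⟨i - 1 - min k (i / 2), by omega⟩

lemma card_Icc_sdiff (hSn : S ⊆ Icc 1 n) : #(Icc 1 n \ S) = n - #S := by
  rw [card_sdiff_of_subset hSn, Nat.card_Icc, Nat.add_sub_cancel]

lemma peakPerm_mapsTo (hS : IsPeakAdmissible S) (hSn : S ⊆ Icc 1 n) :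
    Set.MapsTo (peakPerm n S) (Set.Icc 1 n) (Set.Icc 1 n) := by
  rintro i ⟨hi1, hin⟩
  rw [← coe_Icc, mem_coe]
  rcases eq_two_mul_add_two_or_eq_add_min #S hi1 with ⟨t, ht, rfl⟩ | ⟨j, rfl⟩
  · rw [peakPerm_two_mul_add_two ht]
    exact hSn (Nat.nth_mem_of_lt_card_finset S ht)
  · rw [peakPerm_add_min]
    have hj : j < #(Icc 1 n \ S) := by
      have := hS.two_mul_card_le hSn
      rw [card_Icc_sdiff hSn]
      omega
    exact (mem_sdiff.1 (Nat.nth_mem_of_lt_card_finset _ hj)).1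

lemma peakPerm_surjOn (hS : IsPeakAdmissible S) (hSn : S ⊆ Icc 1 n) :
    Set.SurjOn (peakPerm n S) (Set.Icc 1 n) (Set.Icc 1 n) := by
  intro y hy
  rw [← coe_Icc, mem_coe] at hy
  by_cases hyS : y ∈ S
  · set t := Nat.count (· ∈ S) y
    have := hS y hyS
    refine ⟨2 * t + 2, Set.mem_Icc.2 ⟨by omega, by have := mem_Icc.1 hy; omega⟩, ?_⟩
    rw [peakPerm_two_mul_add_two (Nat.count_lt_card_finset S hyS), Nat.nth_count hyS]
  · have hyC : y ∈ Icc 1 n \ S := mem_sdiff.2 ⟨hy, hyS⟩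
    set j := Nat.count (· ∈ Icc 1 n \ S) y
    have hj : j < n - #S := card_Icc_sdiff hSn ▸ Nat.count_lt_card_finset _ hyC
    refine ⟨j + min j #S + 1, Set.mem_Icc.2 ⟨by omega, by omega⟩, ?_⟩
    rw [peakPerm_add_min, Nat.nth_count hyC]

lemma isPermOn_peakPerm (hS : IsPeakAdmissible S) (hSn : S ⊆ Icc 1 n) :
    IsPermOn n (peakPerm n S) :=
  ((Set.finite_Icc 1 n).surjOn_iff_bijOn_of_mapsTo (peakPerm_mapsTo hS hSn)).1
    (peakPerm_surjOn hS hSn)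

lemma CP_peakPerm_subset (hS : IsPeakAdmissible S) (hSn : S ⊆ Icc 1 n) :
    CP n (peakPerm n S) ⊆ S := by
  simp only [CP, subset_iff, mem_image, mem_filter, mem_Icc]
  rintro _ ⟨i, ⟨⟨hi2, hin⟩, -, hnext⟩, rfl⟩
  rcases eq_two_mul_add_two_or_eq_add_min #S (i := i) (by omega) with ⟨t, ht, rfl⟩ | ⟨j, rfl⟩
  · rw [peakPerm_two_mul_add_two ht]
    exact Nat.nth_mem_of_lt_card_finset S ht
  · exfalso
    rw [peakPerm_add_min] at hnext
    by_cases hj : j < #S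
    · rw [show j + min j #S + 1 + 1 = 2 * j + 2 by omega, peakPerm_two_mul_add_two hj] at hnext
      exact (hS.nth_compl_lt_nth hSn hj le_self_add).not_gt hnext
    · rw [show j + min j #S + 1 + 1 = (j + 1) + min (j + 1) #S + 1 by omega,
        peakPerm_add_min] at hnext
      refine (Nat.nth_lt_nth_of_lt_card_finset _ (lt_add_one j) ?_).not_gt hnext
      rw [card_Icc_sdiff hSn]
      omega

lemma subset_CP_peakPerm (hS : IsPeakAdmissible S) (hSn : S ⊆ Icc 1 n) :
    S ⊆ CP n (peakPerm n S) := by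
  intro s hs
  set t := Nat.count (· ∈ S) s
  have ht : t < #S := Nat.count_lt_card_finset S hs
  have := hS s hs
  have := (mem_Icc.1 (hSn hs)).2
  refine mem_image.2 ⟨2 * t + 2, mem_filter.2 ⟨mem_Icc.2 ⟨by omega, by omega⟩, ?_, ?_⟩, ?_⟩
  · rw [show 2 * t + 2 - 1 = t + min t #S + 1 by omega, peakPerm_add_min,
      peakPerm_two_mul_add_two ht]
    exact hS.nth_compl_lt_nth hSn ht (by omega)
  · rw [show 2 * t + 2 + 1 = (t + 1) + min (t + 1) #S + 1 by omega, peakPerm_add_min,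
      peakPerm_two_mul_add_two ht]
    exact hS.nth_compl_lt_nth hSn ht le_rfl
  · rw [peakPerm_two_mul_add_two ht, Nat.nth_count hs]

end peakPerm

lemma mem_Pn_iff {n : ℕ} {S : Finset ℕ} : S ∈ Pn n ↔ S ⊆ Icc 1 n ∧ IsPeakAdmissible S := by
  simp only [Pn, mem_filter, mem_powerset]
  constructor
  · rintro ⟨hSn, σ, hσ, rfl⟩
    exact ⟨hSn, isPeakAdmissible_CP hσ⟩
  · rintro ⟨hSn, hS⟩
    exact ⟨hSn, peakPerm n S, isPermOn_peakPerm hS hSn,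
      (CP_peakPerm_subset hS hSn).antisymm (subset_CP_peakPerm hS hSn)⟩

theorem Pn_isSimplicialComplex_general (n : ℕ) :
    (∅ ∈ Pn n) ∧
    (∀ x : ℕ, 3 ≤ x → x ≤ n → ({x} : Finset ℕ) ∈ Pn n) ∧
    (∀ S ∈ Pn n, S ⊆ Finset.Icc 3 n) ∧
    (∀ S ∈ Pn n, ∀ T ⊆ S, T ∈ Pn n) := by
  refine ⟨mem_Pn_iff.2 ⟨empty_subset _, isPeakAdmissible_empty⟩, fun x hx3 hxn => ?_,
    fun S hS => ?_, fun S hS T hTS => ?_⟩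
  · exact mem_Pn_iff.2
      ⟨singleton_subset_iff.2 (mem_Icc.2 ⟨by omega, hxn⟩), isPeakAdmissible_singleton hx3⟩
  · obtain ⟨hSn, hS⟩ := mem_Pn_iff.1 hS
    exact hS.subset_Icc_three hSn
  · obtain ⟨hSn, hS⟩ := mem_Pn_iff.1 hS
    exact mem_Pn_iff.2 ⟨hTS.trans hSn, hS.mono hTS⟩

/-- Theorem 3.1: `P_n` is a simplicial complex on the vertex set `[3, n]`. -/
theorem Pn_isSimplicialComplex (n : ℕ) (hn : 3 ≤ n) :
    (∅ ∈ Pn n) ∧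
    (∀ x : ℕ, 3 ≤ x → x ≤ n → ({x} : Finset ℕ) ∈ Pn n) ∧
    (∀ S ∈ Pn n, S ⊆ Finset.Icc 3 n) ∧
    (∀ S ∈ Pn n, ∀ T ⊆ S, T ∈ Pn n) :=
  Pn_isSimplicialComplex_general n
end

section
/- Let n ≥ 3. The maximum cardinality of a set belonging to P_n equals ⌊(n−1)/2⌋; that is, there exists S ∈ P_n with |S| = ⌊(n−1)/2⌋, and every S ∈ P_n satisfies |S| ≤ ⌊(n−1)/2⌋. (Equivalently, the simplicial complex P_n has dimension ⌊(n−1)/2⌋ − 1.) -/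
open Finset Polynomial

/-! Adjacent positions cannot both be peaks, so the peak positions inside `{2, …, n − 1}`
are pairwise non-consecutive and `i ↦ i / 2` embeds them into `{1, …, ⌊(n − 1)/2⌋}`.
The bound is attained by the zigzag `1, n, 2, n − 1, 3, …`, which peaks at every even position. -/

def peakIndices (n : ℕ) (σ : ℕ → ℕ) : Finset ℕ :=
  (Icc 2 (n - 1)).filter (fun i => σ (i - 1) < σ i ∧ σ (i + 1) < σ i)

theorem CP_eq_image_peakIndices (n : ℕ) (σ : ℕ → ℕ) : CP n σ = (peakIndices n σ).image σ :=
  rfl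

theorem peakIndices_subset_Icc (n : ℕ) (σ : ℕ → ℕ) : peakIndices n σ ⊆ Icc 2 (n - 1) :=
  filter_subset _ _

theorem succ_notMem_peakIndices {n : ℕ} {σ : ℕ → ℕ} {i : ℕ} (hi : i ∈ peakIndices n σ) :
    i + 1 ∉ peakIndices n σ := by
  intro hi'
  have hdown := (mem_filter.1 hi).2.2
  have hup := (mem_filter.1 hi').2.1
  rw [Nat.add_sub_cancel] at hup
  omega

theorem card_le_half_of_succ_notMem {A : Finset ℕ} {m : ℕ} (hA : A ⊆ Icc 2 m)
    (hsucc : ∀ i ∈ A, i + 1 ∉ A) : A.card ≤ m / 2 := by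
  calc A.card ≤ (Icc 1 (m / 2)).card := by
        refine card_le_card_of_injOn (· / 2) (fun i hi => ?_) (fun i hi j hj hij => ?_)
        · have := mem_Icc.1 (hA hi)
          simp only [coe_Icc, Set.mem_Icc]
          omega
        · by_contra hne
          have : j = i + 1 ∨ i = j + 1 := by simp only at hij; omega
          rcases this with rfl | rfl
          · exact hsucc i hi hj
          · exact hsucc j hj hi
    _ = m / 2 := by simp

theorem card_CP_le (n : ℕ) (σ : ℕ → ℕ) : (CP n σ).card ≤ (n - 1) / 2 :=
  card_image_le.trans <| card_le_half_of_succ_notMem (peakIndices_subset_Icc n σ)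
    fun _ hi => succ_notMem_peakIndices hi

theorem CP_subset_Icc {n : ℕ} {σ : ℕ → ℕ} (hσ : IsPermOn n σ) : CP n σ ⊆ Icc 1 n := by
  intro x hx
  obtain ⟨i, hi, rfl⟩ := mem_image.1 hx
  have := mem_Icc.1 (peakIndices_subset_Icc n σ hi)
  simpa using hσ.mapsTo (show i ∈ Set.Icc 1 n by simp only [Set.mem_Icc]; omega)

theorem mem_Pn {n : ℕ} {S : Finset ℕ} : S ∈ Pn n ↔ ∃ σ, IsPermOn n σ ∧ CP n σ = S := by
  classical
  refine ⟨fun h => (mem_filter.1 h).2, fun ⟨σ, hσ, hS⟩ => ?_⟩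
  rw [Pn, mem_filter, mem_powerset]
  exact ⟨hS ▸ CP_subset_Icc hσ, σ, hσ, hS⟩

def zigzag (n i : ℕ) : ℕ :=
  if i % 2 = 1 then (i + 1) / 2 else n + 1 - i / 2

theorem zigzag_of_odd {n i : ℕ} (h : i % 2 = 1) : zigzag n i = (i + 1) / 2 := if_pos h

theorem zigzag_of_even {n i : ℕ} (h : i % 2 = 0) : zigzag n i = n + 1 - i / 2 :=
  if_neg (by omega)

theorem zigzag_isPermOn (n : ℕ) : IsPermOn n (zigzag n) := by
  refine ⟨fun i hi => ?_, fun i hi j hj hij => ?_, fun y hy => ?_⟩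
  · simp only [Set.mem_Icc] at hi ⊢
    rcases Nat.mod_two_eq_zero_or_one i with h | h
    · rw [zigzag_of_even h]; omega
    · rw [zigzag_of_odd h]; omega
  · simp only [Set.mem_Icc] at hi hj
    rcases Nat.mod_two_eq_zero_or_one i with hi2 | hi2 <;>
      rcases Nat.mod_two_eq_zero_or_one j with hj2 | hj2 <;>
      simp only [zigzag_of_even, zigzag_of_odd, hi2, hj2] at hij <;> omega
  · simp only [Set.mem_Icc] at hy
    by_cases hy' : y ≤ (n + 1) / 2
    · exact ⟨2 * y - 1, by simp only [Set.mem_Icc]; omega, by rw [zigzag_of_odd (by omega)]; omega⟩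
    · exact ⟨2 * (n + 1 - y), by simp only [Set.mem_Icc]; omega,
        by rw [zigzag_of_even (by omega)]; omega⟩

theorem peakIndices_zigzag (n : ℕ) :
    peakIndices n (zigzag n) = (Icc 1 ((n - 1) / 2)).image (2 * ·) := by
  ext i
  simp only [peakIndices, mem_filter, mem_image, mem_Icc]
  constructor
  · rintro ⟨hi, hpeak⟩
    rcases Nat.mod_two_eq_zero_or_one i with h | h
    · exact ⟨i / 2, by omega, by omega⟩
    · rw [zigzag_of_odd h, zigzag_of_even (i := i - 1) (by omega),
        zigzag_of_even (i := i + 1) (by omega)] at hpeak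
      omega
  · rintro ⟨k, hk, rfl⟩
    refine ⟨by omega, ?_⟩
    rw [zigzag_of_even (i := 2 * k) (by omega), zigzag_of_odd (i := 2 * k - 1) (by omega),
      zigzag_of_odd (i := 2 * k + 1) (by omega)]
    omega

theorem card_CP_zigzag (n : ℕ) : (CP n (zigzag n)).card = (n - 1) / 2 := by
  have hinj : Set.InjOn (zigzag n) (peakIndices n (zigzag n)) :=
    (zigzag_isPermOn n).injOn.mono fun i hi => by
      have := mem_Icc.1 (peakIndices_subset_Icc n _ hi)
      simp only [Set.mem_Icc]; omega
  rw [CP_eq_image_peakIndices, card_image_of_injOn hinj, peakIndices_zigzag,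
    card_image_of_injective _ (fun a b h => by omega), Nat.card_Icc]
  omega

theorem Pn_dimension_general (n : ℕ) :
    (∃ S ∈ Pn n, S.card = (n - 1) / 2) ∧ (∀ S ∈ Pn n, S.card ≤ (n - 1) / 2) := by
  refine ⟨⟨_, mem_Pn.2 ⟨zigzag n, zigzag_isPermOn n, rfl⟩, card_CP_zigzag n⟩, ?_⟩
  rintro S hS
  obtain ⟨σ, -, rfl⟩ := mem_Pn.1 hS
  exact card_CP_le n σ

/-- Theorem 3.2: the maximum cardinality of a member of `P_n` is `⌊(n−1)/2⌋`
(i.e. `dim P_n = ⌊(n−1)/2⌋ − 1`). -/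
theorem Pn_dimension (n : ℕ) (hn : 3 ≤ n) :
    (∃ S ∈ Pn n, S.card = (n - 1) / 2) ∧ (∀ S ∈ Pn n, S.card ≤ (n - 1) / 2) :=
  Pn_dimension_general n
end

section
/- Let n ≥ 3 and let μ denote the Möbius function of the finite poset P_n ordered by inclusion. Then for all S, T ∈ P_n with S ⊆ T, one has μ(S, T) = (−1)^{|T| − |S|}. -/
open Finset Polynomial

noncomputable def nth (s : Finset ℕ) (j : ℕ) : ℕ :=
  if h : j < s.card then (s.orderIsoOfFin rfl ⟨j, h⟩ : ℕ) else 0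

lemma nth_mem {s : Finset ℕ} {j : ℕ} (h : j < s.card) : nth s j ∈ s := by
  simp only [nth, dif_pos h]
  exact (s.orderIsoOfFin rfl ⟨j, h⟩).2

lemma nth_lt_nth {s : Finset ℕ} {i j : ℕ} (hij : i < j) (h : j < s.card) :
    nth s i < nth s j := by
  have hi : i < s.card := hij.trans h
  simp only [nth, dif_pos h, dif_pos hi]
  exact (s.orderIsoOfFin rfl).strictMono (show (⟨i, hi⟩ : Fin s.card) < ⟨j, h⟩ from hij)

lemma nth_surj {s : Finset ℕ} {x : ℕ} (hx : x ∈ s) : ∃ j < s.card, nth s j = x := by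
  refine ⟨((s.orderIsoOfFin rfl).symm ⟨x, hx⟩ : Fin s.card), Fin.is_lt _, ?_⟩
  simp only [nth, dif_pos (Fin.is_lt _), Fin.eta]
  have := (s.orderIsoOfFin rfl).apply_symm_apply ⟨x, hx⟩
  exact congrArg Subtype.val this

lemma nth_le_nth_iff {s : Finset ℕ} {i j : ℕ} (hi : i < s.card) (h : j < s.card) :
    nth s i ≤ nth s j ↔ i ≤ j := by
  constructor
  · intro hle
    by_contra hij
    exact absurd (nth_lt_nth (Nat.lt_of_not_le hij) hi) (not_lt.2 hle)
  · intro hij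
    rcases eq_or_lt_of_le hij with rfl | hlt
    · exact le_refl _
    · exact (nth_lt_nth hlt h).le

lemma nth_inj {s : Finset ℕ} {a b : ℕ} (ha : a < s.card) (hb : b < s.card)
    (h : nth s a = nth s b) : a = b :=
  le_antisymm ((nth_le_nth_iff ha hb).1 h.le) ((nth_le_nth_iff hb ha).1 h.ge)

open scoped Classical

lemma filter_le_nth {s : Finset ℕ} {j : ℕ} (h : j < s.card) :
    s.filter (fun x => x ≤ nth s j) = (Finset.range (j+1)).image (nth s) := by
  ext x
  simp only [mem_filter, mem_image, mem_range]
  constructor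
  · rintro ⟨hxs, hxle⟩
    obtain ⟨i, hi, rfl⟩ := nth_surj hxs
    exact ⟨i, Nat.lt_succ_of_le ((nth_le_nth_iff hi h).1 hxle), rfl⟩
  · rintro ⟨i, hi, rfl⟩
    have hi' : i ≤ j := Nat.lt_succ_iff.1 hi
    exact ⟨nth_mem (lt_of_le_of_lt hi' h), (nth_le_nth_iff (lt_of_le_of_lt hi' h) h).2 hi'⟩

lemma card_filter_le_nth {s : Finset ℕ} {j : ℕ} (h : j < s.card) :
    (s.filter (fun x => x ≤ nth s j)).card = j + 1 := by
  rw [filter_le_nth h, Finset.card_image_of_injOn, Finset.card_range]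
  intro a ha b hb hab
  simp only [coe_range, Set.mem_Iio] at ha hb
  by_contra hne
  rcases Nat.lt_or_ge a b with hl | hl
  · exact absurd hab (Nat.ne_of_lt (nth_lt_nth hl (lt_of_lt_of_le hb (Nat.succ_le_of_lt h))))
  · rcases Nat.lt_or_ge b a with hl2 | hl2
    · exact absurd hab.symm (Nat.ne_of_lt (nth_lt_nth hl2 (lt_of_lt_of_le ha (Nat.succ_le_of_lt h))))
    · exact hne (le_antisymm hl2 hl)

lemma nth_lt_of_filter {s : Finset ℕ} {z i : ℕ}
    (hi : i < (s.filter (fun x => x < z)).card) : nth s i < z := by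
  have his : i < s.card := lt_of_lt_of_le hi (card_filter_le _ _)
  by_contra hge
  push_neg at hge
  have hsub : s.filter (fun x => x < z) ⊆ (Finset.range i).image (nth s) := by
    intro x hx
    simp only [mem_filter] at hx
    obtain ⟨a, ha, rfl⟩ := nth_surj hx.1
    have : a < i := by
      by_contra hai
      push_neg at hai
      exact absurd (le_trans hge ((nth_le_nth_iff his ha).2 hai)) (not_le.2 hx.2)
    exact mem_image.2 ⟨a, mem_range.2 this, rfl⟩
  have := (Finset.card_le_card hsub).trans ((Finset.card_image_le).trans (le_of_eq (card_range i)))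
  omega

lemma CP_valid {n : ℕ} {σ : ℕ → ℕ} (hσ : IsPermOn n σ) {t : ℕ} (ht : t ∈ CP n σ) :
    2 * ((CP n σ).filter (fun x => x ≤ t)).card + 1 ≤ t := by
  set Q : Finset ℕ := (Finset.Icc 2 (n-1)).filter
      (fun i => (σ (i-1) < σ i ∧ σ (i+1) < σ i) ∧ σ i ≤ t) with hQdef
  -- basic facts about members of Q
  have hQmem : ∀ i ∈ Q, 2 ≤ i ∧ i ≤ n - 1 ∧ σ (i-1) < σ i ∧ σ (i+1) < σ i ∧ σ i ≤ t := by
    intro i hi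
    simp only [hQdef, mem_filter, mem_Icc] at hi
    exact ⟨hi.1.1, hi.1.2, hi.2.1.1, hi.2.1.2, hi.2.2⟩
  have hQne : Q.Nonempty := by
    obtain ⟨i, hi, hit⟩ := mem_image.1 ht
    simp only [mem_filter, mem_Icc] at hi
    exact ⟨i, by simp only [hQdef, mem_filter, mem_Icc]; exact ⟨hi.1, hi.2, le_of_eq hit⟩⟩
  set m := Q.min' hQne with hmdef
  have hmQ : m ∈ Q := Q.min'_mem hQne
  have hm2 : 2 ≤ m := (hQmem m hmQ).1
  have hn3 : 2 ≤ n - 1 := le_trans hm2 (hQmem m hmQ).2.1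
  -- the две extra position sets
  have hdisj1 : Disjoint Q (Q.image (· + 1)) := by
    rw [Finset.disjoint_left]
    intro i hiQ hiI
    obtain ⟨q, hqQ, hq⟩ := mem_image.1 hiI
    have h1 := (hQmem i hiQ).2.2.1
    have h2 := (hQmem q hqQ).2.2.2.1
    subst hq
    simp only [Nat.add_sub_cancel] at h1
    omega
  have hdisj2 : Disjoint (Q ∪ Q.image (· + 1)) {m - 1} := by
    rw [Finset.disjoint_right]
    intro i hi hiU
    simp only [mem_singleton] at hi
    subst hi
    rcases mem_union.1 hiU with h | h
    · have := Q.min'_le _ h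
      omega
    · obtain ⟨q, hqQ, hq⟩ := mem_image.1 h
      have := Q.min'_le _ hqQ
      have hq2 := (hQmem q hqQ).1
      omega
  set U := (Q ∪ Q.image (· + 1)) ∪ {m - 1} with hUdef
  have hUcard : U.card = 2 * Q.card + 1 := by
    rw [hUdef, Finset.card_union_of_disjoint hdisj2,
      Finset.card_union_of_disjoint hdisj1,
      Finset.card_image_of_injective _ (add_left_injective 1), card_singleton]
    ring
  have hUsub : ∀ i ∈ U, i ∈ Set.Icc 1 n := by
    intro i hi
    rcases mem_union.1 hi with h | h
    · rcases mem_union.1 h with h1 | h1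
      · have := hQmem i h1; simp only [Set.mem_Icc]; omega
      · obtain ⟨q, hqQ, hq⟩ := mem_image.1 h1
        have := hQmem q hqQ; simp only [Set.mem_Icc]; omega
    · simp only [mem_singleton] at h
      have := hQmem m hmQ
      simp only [Set.mem_Icc]; omega
  have hUval : ∀ i ∈ U, σ i ∈ Finset.Icc 1 t := by
    intro i hi
    have h1 : 1 ≤ σ i := (Set.mem_Icc.1 (hσ.mapsTo (hUsub i hi))).1
    rw [mem_Icc]
    refine ⟨h1, ?_⟩
    rcases mem_union.1 hi with h | h
    · rcases mem_union.1 h with h1' | h1'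
      · exact (hQmem i h1').2.2.2.2
      · obtain ⟨q, hqQ, hq⟩ := mem_image.1 h1'
        have hh := hQmem q hqQ
        subst hq
        exact le_trans hh.2.2.2.1.le hh.2.2.2.2
    · simp only [mem_singleton] at h
      subst h
      have hh := hQmem m hmQ
      exact le_trans hh.2.2.1.le hh.2.2.2.2
  have hinj : Set.InjOn σ ↑U := hσ.injOn.mono (fun x hx => hUsub x hx)
  have hcard1 : U.card ≤ t := by
    have h1 : U.image σ ⊆ Finset.Icc 1 t := fun x hx => by
      obtain ⟨i, hi, rfl⟩ := mem_image.1 hx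
      exact hUval i hi
    have h2 := Finset.card_le_card h1
    rw [Finset.card_image_of_injOn hinj] at h2
    simpa using h2
  have hcard2 : ((CP n σ).filter (fun x => x ≤ t)).card ≤ Q.card := by
    have hsub : (CP n σ).filter (fun x => x ≤ t) ⊆ Q.image σ := by
      intro s hs
      obtain ⟨hsCP, hst⟩ := mem_filter.1 hs
      obtain ⟨i, hi, rfl⟩ := mem_image.1 hsCP
      simp only [mem_filter, mem_Icc] at hi
      refine mem_image.2 ⟨i, ?_, rfl⟩
      simp only [hQdef, mem_filter, mem_Icc]
      exact ⟨hi.1, hi.2, hst⟩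
    exact le_trans (Finset.card_le_card hsub) Finset.card_image_le
  omega

lemma valid_mem_Pn {n : ℕ} (hn : 1 ≤ n) {Z : Finset ℕ} (hZ : Z ⊆ Finset.Icc 1 n)
    (hval : ∀ z ∈ Z, 2 * (Z.filter (fun x => x ≤ z)).card + 1 ≤ z) :
    ∃ σ : ℕ → ℕ, IsPermOn n σ ∧ CP n σ = Z := by
  set k := Z.card with hk
  set R := Finset.Icc 1 n \ Z with hR
  have hRcard : R.card = n - k := by
    rw [hR, card_sdiff_of_subset hZ, Nat.card_Icc]
    omega
  -- basic bounds on elements of Z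
  have hzn : ∀ j < k, 2*j+3 ≤ nth Z j ∧ nth Z j ≤ n := by
    intro j hj
    have hmem : nth Z j ∈ Z := nth_mem hj
    have h1 := hval _ hmem
    rw [card_filter_le_nth hj] at h1
    have h2 := (mem_Icc.1 (hZ hmem)).2
    omega
  have h2k : 2*k+1 ≤ n := by
    rcases Nat.eq_zero_or_pos k with h0 | h0
    · omega
    · have := hzn (k-1) (by omega)
      omega
  have hkR : k + 1 ≤ R.card := by omega
  -- key inequalities
  have hRZ : ∀ j < k, nth R (j+1) < nth Z j := by
    intro j hj
    set z := nth Z j with hz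
    have hzZ : z ∈ Z := nth_mem hj
    have hzb := hzn j hj
    apply nth_lt_of_filter (i := j+1)
    have hunion : Finset.Icc 1 z = Z.filter (fun x => x ≤ z) ∪ R.filter (fun x => x < z) := by
      ext x
      simp only [mem_Icc, mem_union, mem_filter, hR, mem_sdiff]
      constructor
      · rintro ⟨hx1, hxz⟩
        by_cases hxZ : x ∈ Z
        · exact Or.inl ⟨hxZ, hxz⟩
        · have hxz' : x < z := lt_of_le_of_ne hxz (fun h => hxZ (h ▸ hzZ))
          exact Or.inr ⟨⟨⟨hx1, le_trans hxz hzb.2⟩, hxZ⟩, hxz'⟩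
      · rintro (⟨hxZ, hxz⟩ | ⟨⟨hxI, _⟩, hxz⟩)
        · exact ⟨(mem_Icc.1 (hZ hxZ)).1, hxz⟩
        · exact ⟨hxI.1, hxz.le⟩
    have hdisj : Disjoint (Z.filter (fun x => x ≤ z)) (R.filter (fun x => x < z)) := by
      apply Finset.disjoint_filter_filter
      rw [hR]
      exact Finset.sdiff_disjoint.symm
    have hcz : (Finset.Icc 1 z).card = z := by rw [Nat.card_Icc]; omega
    have := Finset.card_union_of_disjoint hdisj
    rw [← hunion, hcz, card_filter_le_nth hj] at this
    omega
  have hRZ0 : ∀ j < k, nth R j < nth Z j := fun j hj =>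
    lt_trans (nth_lt_nth (Nat.lt_succ_self j) (by omega)) (hRZ j hj)
  -- the permutation
  set σ : ℕ → ℕ := fun i =>
    if 1 ≤ i ∧ i ≤ n then
      (if i % 2 = 0 ∧ i ≤ 2 * k then nth Z (i / 2 - 1)
       else nth R (if i ≤ 2 * k then (i - 1) / 2 else i - k - 1))
    else i with hσ
  -- value lemmas
  have hsvz : ∀ a < k, σ (2*a+2) = nth Z a := by
    intro a ha
    have h1 : 1 ≤ 2*a+2 ∧ 2*a+2 ≤ n := by omega
    have h2 : (2*a+2) % 2 = 0 ∧ 2*a+2 ≤ 2*k := by omega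
    simp only [hσ, if_pos h1, if_pos h2]
    congr 1
    omega
  have hsvo : ∀ a < k, σ (2*a+1) = nth R a := by
    intro a ha
    have h1 : 1 ≤ 2*a+1 ∧ 2*a+1 ≤ n := by omega
    have h2 : ¬((2*a+1) % 2 = 0 ∧ 2*a+1 ≤ 2*k) := by omega
    have h3 : 2*a+1 ≤ 2*k := by omega
    simp only [hσ, if_pos h1, if_neg h2, if_pos h3]
    congr 1
    omega
  have hsvt : ∀ i, 2*k+1 ≤ i → i ≤ n → σ i = nth R (i - k - 1) := by
    intro i hik hin
    have h1 : 1 ≤ i ∧ i ≤ n := by omega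
    have h2 : ¬(i % 2 = 0 ∧ i ≤ 2*k) := by omega
    by_cases h3 : i ≤ 2 * k
    · -- then i = 2k+... impossible unless i = 2k+1 > 2k, contradiction with h3 unless...
      omega
    · simp only [hσ, if_pos h1, if_neg h2, if_neg h3]
  -- maps to
  have hmaps : ∀ i, 1 ≤ i → i ≤ n → σ i ∈ Finset.Icc 1 n := by
    intro i h1 h2
    simp only [hσ, if_pos (And.intro h1 h2)]
    by_cases hc : i % 2 = 0 ∧ i ≤ 2 * k
    · rw [if_pos hc]
      exact hZ (nth_mem (by omega))
    · rw [if_neg hc]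
      have : (if i ≤ 2 * k then (i - 1) / 2 else i - k - 1) < R.card := by
        split <;> omega
      have := nth_mem this
      rw [hR, mem_sdiff] at this
      exact this.1
  have hmapsZ : ∀ i, 1 ≤ i → i ≤ n → (i % 2 = 0 ∧ i ≤ 2 * k) → σ i ∈ Z := by
    intro i h1 h2 hc
    simp only [hσ, if_pos (And.intro h1 h2), if_pos hc]
    exact nth_mem (by omega)
  have hmapsR : ∀ i, 1 ≤ i → i ≤ n → ¬(i % 2 = 0 ∧ i ≤ 2 * k) → σ i ∉ Z := by
    intro i h1 h2 hc
    simp only [hσ, if_pos (And.intro h1 h2), if_neg hc]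
    have : (if i ≤ 2 * k then (i - 1) / 2 else i - k - 1) < R.card := by
      split <;> omega
    have := nth_mem this
    rw [hR, mem_sdiff] at this
    exact this.2
  -- injectivity
  have hinj : Set.InjOn σ (Set.Icc 1 n) := by
    intro x hx y hy hxy
    rw [Set.mem_Icc] at hx hy
    by_cases hcx : x % 2 = 0 ∧ x ≤ 2 * k <;> by_cases hcy : y % 2 = 0 ∧ y ≤ 2 * k
    · have ex : σ x = nth Z (x / 2 - 1) := by
        simp only [hσ, if_pos (And.intro hx.1 hx.2), if_pos hcx]
      have ey : σ y = nth Z (y / 2 - 1) := by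
        simp only [hσ, if_pos (And.intro hy.1 hy.2), if_pos hcy]
      rw [ex, ey] at hxy
      have := nth_inj (s := Z) (by omega) (by omega) hxy
      omega
    · exact absurd ((hxy ▸ hmapsZ x hx.1 hx.2 hcx)) (hmapsR y hy.1 hy.2 hcy)
    · exact absurd ((hxy ▸ hmapsR x hx.1 hx.2 hcx)) (by simp [hmapsZ y hy.1 hy.2 hcy])
    · have ex : σ x = nth R (if x ≤ 2 * k then (x - 1) / 2 else x - k - 1) := by
        simp only [hσ, if_pos (And.intro hx.1 hx.2), if_neg hcx]
      have ey : σ y = nth R (if y ≤ 2 * k then (y - 1) / 2 else y - k - 1) := by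
        simp only [hσ, if_pos (And.intro hy.1 hy.2), if_neg hcy]
      rw [ex, ey] at hxy
      have hxlt : (if x ≤ 2 * k then (x - 1) / 2 else x - k - 1) < R.card := by
        split <;> omega
      have hylt : (if y ≤ 2 * k then (y - 1) / 2 else y - k - 1) < R.card := by
        split <;> omega
      have := nth_inj hxlt hylt hxy
      split_ifs at this <;> omega
  have hperm : IsPermOn n σ := by
    have hm : Set.MapsTo σ (Set.Icc 1 n) (Set.Icc 1 n) := by
      intro x hx
      rw [Set.mem_Icc] at hx
      have := hmaps x hx.1 hx.2
      rw [mem_Icc] at this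
      exact Set.mem_Icc.2 this
    exact ((Set.finite_Icc 1 n).injOn_iff_bijOn_of_mapsTo hm).1 hinj
  refine ⟨σ, hperm, ?_⟩
  -- compute the circular peak set
  have hfilt : (Finset.Icc 2 (n - 1)).filter (fun i => σ (i - 1) < σ i ∧ σ (i + 1) < σ i)
      = (Finset.range k).image (fun a => 2*a+2) := by
    ext i
    simp only [mem_filter, mem_Icc, mem_image, mem_range]
    constructor
    · rintro ⟨⟨hi2, hin⟩, hpk1, hpk2⟩
      by_cases hc : i % 2 = 0 ∧ i ≤ 2 * k
      · exact ⟨i / 2 - 1, by omega, by omega⟩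
      · exfalso
        by_cases h3 : i ≤ 2 * k
        · -- i odd, i ≤ 2k : next position is a Z value, bigger
          have hio : i % 2 = 1 := by omega
          set a := (i - 1) / 2 with ha
          have hia : i = 2*a+1 := by omega
          have hak : a < k := by omega
          have e1 : σ i = nth R a := by rw [hia]; exact hsvo a hak
          have e2 : σ (i+1) = nth Z a := by
            have : i + 1 = 2*a+2 := by omega
            rw [this]; exact hsvz a hak
          rw [e1, e2] at hpk2
          exact absurd hpk2 (not_lt.2 (hRZ0 a hak).le)
        · -- tail : increasing
          have e1 : σ i = nth R (i - k - 1) := hsvt i (by omega) (by omega)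
          have e2 : σ (i+1) = nth R (i - k) := by
            have := hsvt (i+1) (by omega) (by omega)
            rw [this]; congr 1; omega
          rw [e1, e2] at hpk2
          have : nth R (i - k - 1) < nth R (i - k) :=
            nth_lt_nth (by omega) (by omega)
          omega
    · rintro ⟨a, hak, rfl⟩
      refine ⟨⟨by omega, by omega⟩, ?_, ?_⟩
      · have e1 : σ (2*a+2-1) = nth R a := by
          have : 2*a+2-1 = 2*a+1 := by omega
          rw [this]; exact hsvo a hak
        rw [e1, hsvz a hak]
        exact hRZ0 a hak
      · have e2 : σ (2*a+2+1) = nth R (a+1) := by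
          by_cases hc : a + 1 < k
          · have : 2*a+2+1 = 2*(a+1)+1 := by omega
            rw [this]; exact hsvo (a+1) hc
          · have hak1 : a + 1 = k := by omega
            have := hsvt (2*a+3) (by omega) (by omega)
            have h' : 2*a+2+1 = 2*a+3 := by omega
            rw [h', this]; congr 1; omega
        rw [e2, hsvz a hak]
        exact hRZ a hak
  rw [CP, hfilt, Finset.image_image]
  ext x
  simp only [mem_image, mem_range, Function.comp_apply]
  constructor
  · rintro ⟨a, hak, rfl⟩
    rw [hsvz a hak]
    exact nth_mem hak
  · intro hx
    obtain ⟨j, hj, hje⟩ := nth_surj hx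
    exact ⟨j, hj, by rw [hsvz j hj, hje]⟩

lemma Pn_down {n : ℕ} (hn : 1 ≤ n) {T Z : Finset ℕ} (hT : T ∈ Pn n) (hZT : Z ⊆ T) :
    Z ∈ Pn n := by
  classical
  rw [Pn, mem_filter, mem_powerset] at hT
  obtain ⟨hTI, σ, hσ, hCP⟩ := hT
  have hval : ∀ z ∈ Z, 2 * (Z.filter (fun x => x ≤ z)).card + 1 ≤ z := by
    intro z hz
    have h1 : 2 * (T.filter (fun x => x ≤ z)).card + 1 ≤ z := by
      have := CP_valid hσ (t := z) (by rw [hCP]; exact hZT hz)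
      rwa [hCP] at this
    have h2 : (Z.filter (fun x => x ≤ z)).card ≤ (T.filter (fun x => x ≤ z)).card :=
      card_le_card (filter_subset_filter _ hZT)
    omega
  obtain ⟨τ, hτ, hτCP⟩ := valid_mem_Pn hn (hZT.trans hTI) hval
  rw [Pn, mem_filter, mem_powerset]
  exact ⟨hZT.trans hTI, τ, hτ, hτCP⟩

/-- Corollary 3.2: the Möbius function of the poset `P_n` (ordered by inclusion)
satisfies `μ(S, T) = (−1)^{|T|−|S|}` for all `S ⊆ T` in `P_n`. -/
theorem Pn_mobius (n : ℕ) (hn : 3 ≤ n) (μ : Finset ℕ → Finset ℕ → ℤ)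
    (hrefl : ∀ S ∈ Pn n, μ S S = 1)
    (hrec : ∀ S ∈ Pn n, ∀ T ∈ Pn n, S ⊂ T →
      μ S T = -∑ Z ∈ (Pn n).filter (fun Z => S ⊆ Z ∧ Z ⊂ T), μ S Z) :
    ∀ S ∈ Pn n, ∀ T ∈ Pn n, S ⊆ T → μ S T = (-1) ^ (T.card - S.card) := by
  classical
  have hn1 : 1 ≤ n := by omega
  suffices main : ∀ m : ℕ, ∀ S ∈ Pn n, ∀ T ∈ Pn n, S ⊆ T → T.card ≤ m →
      μ S T = (-1) ^ (T.card - S.card) by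
    intro S hS T hT hST
    exact main T.card S hS T hT hST le_rfl
  intro m
  induction m with
  | zero =>
    intro S hS T hT hST hc
    have hTe : T = ∅ := card_eq_zero.1 (Nat.le_antisymm hc (Nat.zero_le _))
    have hSe : S = ∅ := subset_empty.1 (hTe ▸ hST)
    rw [hSe, hTe]
    simpa using hrefl ∅ (hSe ▸ hS)
  | succ m ih =>
    intro S hS T hT hST hc
    by_cases hEq : S = T
    · subst hEq
      simpa using hrefl S hS
    · have hss : S ⊂ T := Finset.ssubset_iff_subset_ne.2 ⟨hST, hEq⟩
      rw [hrec S hS T hT hss]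
      have hsum1 : ∑ Z ∈ (Pn n).filter (fun Z => S ⊆ Z ∧ Z ⊂ T), μ S Z
          = ∑ Z ∈ (Pn n).filter (fun Z => S ⊆ Z ∧ Z ⊂ T), (-1:ℤ)^(Z.card - S.card) := by
        refine sum_congr rfl (fun Z hZ => ?_)
        rw [mem_filter] at hZ
        refine ih S hS Z hZ.1 hZ.2.1 ?_
        have := card_lt_card hZ.2.2
        omega
      have hsetEq : (Pn n).filter (fun Z => S ⊆ Z ∧ Z ⊂ T)
          = T.powerset.filter (fun Z => S ⊆ Z ∧ Z ≠ T) := by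
        ext Z
        simp only [mem_filter, mem_powerset]
        constructor
        · rintro ⟨_, hSZ, hZT⟩
          exact ⟨hZT.subset, hSZ, (Finset.ssubset_iff_subset_ne.1 hZT).2⟩
        · rintro ⟨hZT, hSZ, hne⟩
          exact ⟨Pn_down hn1 hT hZT, hSZ, Finset.ssubset_iff_subset_ne.2 ⟨hZT, hne⟩⟩
      have hTS : (T \ S).Nonempty := sdiff_nonempty.2 (fun h => hEq (Subset.antisymm hST h))
      have hsum2 : ∑ Z ∈ T.powerset.filter (fun Z => S ⊆ Z ∧ Z ≠ T), (-1:ℤ)^(Z.card - S.card)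
          = ∑ W ∈ (T \ S).powerset.filter (fun W => W ≠ T \ S), (-1:ℤ)^W.card := by
        refine sum_nbij' (fun Z => Z \ S) (fun W => W ∪ S) ?_ ?_ ?_ ?_ ?_
        · intro Z hZ
          rw [mem_filter, mem_powerset] at *
          obtain ⟨hZT, hSZ, hne⟩ := hZ
          refine ⟨sdiff_subset_sdiff hZT (le_refl S), fun h => hne ?_⟩
          have h' : Z \ S = T \ S := h
          have h1 : Z \ S ∪ S = T \ S ∪ S := by rw [h']
          rwa [sdiff_union_of_subset hSZ, sdiff_union_of_subset hST] at h1
        · intro W hW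
          rw [mem_filter, mem_powerset] at *
          obtain ⟨hWT, hne⟩ := hW
          have hWS : Disjoint W S := by
            refine Finset.disjoint_left.2 (fun a haW haS => ?_)
            exact (mem_sdiff.1 (hWT haW)).2 haS
          refine ⟨union_subset (hWT.trans sdiff_subset) hST, subset_union_right, fun h => hne ?_⟩
          have h' : W ∪ S = T := h
          have h1 : (W ∪ S) \ S = T \ S := by rw [h']
          rwa [union_sdiff_right, sdiff_eq_self_of_disjoint hWS] at h1
        · intro Z hZ
          rw [mem_filter, mem_powerset] at hZ
          show Z \ S ∪ S = Z
          exact sdiff_union_of_subset hZ.2.1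
        · intro W hW
          rw [mem_filter, mem_powerset] at hW
          have hWS : Disjoint W S := by
            refine Finset.disjoint_left.2 (fun a haW haS => ?_)
            exact (mem_sdiff.1 (hW.1 haW)).2 haS
          show (W ∪ S) \ S = W
          rw [union_sdiff_right, sdiff_eq_self_of_disjoint hWS]
        · intro Z hZ
          rw [mem_filter, mem_powerset] at hZ
          show ((-1:ℤ))^(#Z - #S) = (-1:ℤ)^(#(Z \ S))
          rw [card_sdiff_of_subset hZ.2.1]
      have hsum3 : ∑ W ∈ (T \ S).powerset.filter (fun W => W ≠ T \ S), (-1:ℤ)^W.card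
          = - (-1:ℤ)^(T \ S).card := by
        rw [filter_ne', sum_erase_eq_sub (mem_powerset_self _),
          sum_powerset_neg_one_pow_card_of_nonempty hTS]
        ring
      rw [hsum1, hsetEq, hsum2, hsum3, card_sdiff_of_subset hST]
      ring
end
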